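/- arXiv:1403.5003 — 5 statements merged into one kernel-verified Lean document; each statement's English description precedes it below -/
import Mathlib

section
/- For every finite simple graph G and every natural number ℓ with ℓ ≥ θ'_e(G), the entanglement-assisted compound independence number with ℓ receivers equals the classical independence number: α*_{1,ℓ}(G) = α(G). -/
open scoped BigOperators ComplexOrder
open Matrix

noncomputable section

namespace ZeroError

variable {V W : Type*}

/-- The independence number of a simple graph: the maximum cardinality of a set of
pairwise non-adjacent vertices. -/
def indepNum [Fintype V] (G : SimpleGraph V) : ℕ :=
  sSup {n | ∃ s : Finset V, s.card = n ∧ ∀ u ∈ s, ∀ v ∈ s, u ≠ v → ¬ G.Adj u v}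

/-- The strong product of two simple graphs. -/
def strongProd (G : SimpleGraph V) (H : SimpleGraph W) : SimpleGraph (V × W) where
  Adj x y := x ≠ y ∧ (x.1 = y.1 ∨ G.Adj x.1 y.1) ∧ (x.2 = y.2 ∨ H.Adj x.2 y.2)
  symm := by
    constructor
    rintro x y ⟨hne, h1, h2⟩
    exact ⟨hne.symm, h1.imp Eq.symm (fun a => a.symm), h2.imp Eq.symm (fun a => a.symm)⟩
  loopless := by constructor; rintro x ⟨hne, -⟩; exact hne rfl

/-- The n-fold strong power of a simple graph. -/
def strongPow (G : SimpleGraph V) (n : ℕ) : SimpleGraph (Fin n → V) where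
  Adj u v := u ≠ v ∧ ∀ i, u i = v i ∨ G.Adj (u i) (v i)
  symm := by
    constructor
    rintro u v ⟨hne, h⟩
    exact ⟨hne.symm, fun i => (h i).imp Eq.symm (fun a => a.symm)⟩
  loopless := by constructor; rintro u ⟨hne, -⟩; exact hne rfl

/-- `copies G ℓ` is the disjoint union `G^{+ℓ}` of ℓ copies of `G`. -/
def copies (G : SimpleGraph V) (ℓ : ℕ) : SimpleGraph (V × Fin ℓ) where
  Adj x y := x.2 = y.2 ∧ G.Adj x.1 y.1
  symm := by constructor; rintro x y ⟨h1, h2⟩; exact ⟨h1.symm, h2.symm⟩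
  loopless := by constructor; rintro x ⟨-, h⟩; exact G.loopless.irrefl _ h

/-- The Cartesian product `G □ K_t` of a graph with the complete graph on `t` vertices. -/
def cartProdK (G : SimpleGraph V) (t : ℕ) : SimpleGraph (V × Fin t) where
  Adj x y := (G.Adj x.1 y.1 ∧ x.2 = y.2) ∨ (x.1 = y.1 ∧ x.2 ≠ y.2)
  symm := by
    constructor
    rintro x y (⟨h1, h2⟩ | ⟨h1, h2⟩)
    · exact Or.inl ⟨h1.symm, h2.symm⟩
    · exact Or.inr ⟨h1.symm, h2.symm⟩
  loopless := by constructor; rintro x (⟨h, -⟩ | ⟨-, h⟩); exacts [G.loopless.irrefl _ h, h rfl]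

/-- The chromatic number: the least number of colors of a proper coloring. -/
def chromNum [Fintype V] (G : SimpleGraph V) : ℕ :=
  sInf {m | ∃ c : V → Fin m, ∀ u v, G.Adj u v → c u ≠ c v}

/-- The entanglement-assisted independence number `α*(G)`. -/
def qIndepNum [Fintype V] (G : SimpleGraph V) : ℕ :=
  sSup {m | ∃ (d : ℕ) (ρ : Matrix (Fin d) (Fin d) ℂ)
      (σ : Fin m → V → Matrix (Fin d) (Fin d) ℂ),
    ρ.PosSemidef ∧ ρ.trace = 1 ∧ (∀ i u, (σ i u).PosSemidef) ∧
    (∀ i, ∑ u, σ i u = ρ) ∧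
    ∀ i j u v, i ≠ j → (u = v ∨ G.Adj u v) → σ i u * σ j v = 0}

/-- The entanglement-assisted chromatic number `χ*(G)`. -/
def qChromNum [Fintype V] (G : SimpleGraph V) : ℕ :=
  sInf {m | ∃ (d : ℕ) (ρ : Matrix (Fin d) (Fin d) ℂ)
      (σ : V → Fin m → Matrix (Fin d) (Fin d) ℂ),
    ρ.PosSemidef ∧ ρ.trace = 1 ∧ (∀ x i, (σ x i).PosSemidef) ∧
    (∀ x, ∑ i, σ x i = ρ) ∧
    ∀ x y i, G.Adj x y → σ x i * σ y i = 0}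

/-- The partial trace onto the k-th tensor factor:
`(Tr_{B_{-k}} M)_{a,b} = Σ M_{s,t}` over tuples `s, t` with `s k = a`, `t k = b` and
`s r = t r` for all `r ≠ k`. -/
def ptraceK {d ℓ : ℕ} (k : Fin ℓ)
    (M : Matrix (Fin ℓ → Fin d) (Fin ℓ → Fin d) ℂ) : Matrix (Fin d) (Fin d) ℂ :=
  Matrix.of fun a b => ∑ s : Fin ℓ → Fin d, ∑ t : Fin ℓ → Fin d,
    if s k = a ∧ t k = b ∧ ∀ r, r ≠ k → s r = t r then M s t else 0

/-- The entanglement-assisted compound independence number `α*_{1,ℓ}(G)` with ℓ receivers. -/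
def qCompoundNum [Fintype V] (G : SimpleGraph V) (ℓ : ℕ) : ℕ :=
  sSup {m | ∃ (d : ℕ) (ρ : Matrix (Fin ℓ → Fin d) (Fin ℓ → Fin d) ℂ)
      (σ : Fin m → V → Matrix (Fin ℓ → Fin d) (Fin ℓ → Fin d) ℂ),
    ρ.PosSemidef ∧ ρ.trace = 1 ∧ (∀ i u, (σ i u).PosSemidef) ∧
    (∀ i, ∑ u, σ i u = ρ) ∧
    ∀ (k : Fin ℓ) i j u v, i ≠ j → (u = v ∨ G.Adj u v) →
      ptraceK k (σ i u) * ptraceK k (σ j v) = 0}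

/-- The Shannon capacity `c(G) = sup_{n ≥ 1} (1/n) log₂ α(G^{⊠n})`. -/
def shannonCap [Fintype V] (G : SimpleGraph V) : ℝ :=
  ⨆ n : ℕ+, Real.logb 2 (indepNum (strongPow G (n : ℕ))) / ((n : ℕ) : ℝ)

/-- The entangled Shannon capacity `c*(G) = sup_{n ≥ 1} (1/n) log₂ α*(G^{⊠n})`. -/
def qShannonCap [Fintype V] (G : SimpleGraph V) : ℝ :=
  ⨆ n : ℕ+, Real.logb 2 (qIndepNum (strongPow G (n : ℕ))) / ((n : ℕ) : ℝ)

/-- The entanglement-assisted compound Shannon capacity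
`c*_{1,ℓ}(G) = sup_{n ≥ 1} (1/n) log₂ α*_{1,ℓ}(G^{⊠n})`. -/
def qCompoundCap [Fintype V] (G : SimpleGraph V) (ℓ : ℕ) : ℝ :=
  ⨆ n : ℕ+, Real.logb 2 (qCompoundNum (strongPow G (n : ℕ)) ℓ) / ((n : ℕ) : ℝ)

/-- The edge-clique cover number `θ_e(G)`: the least number of cliques covering all edges. -/
def edgeCliqueCoverNum [Fintype V] (G : SimpleGraph V) : ℕ :=
  sInf {n | ∃ F : Finset (Finset V), F.card = n ∧ (∀ c ∈ F, G.IsClique (c : Set V)) ∧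
    ∀ u v, G.Adj u v → ∃ c ∈ F, u ∈ c ∧ v ∈ c}

/-- `θ'_e(G)`: the edge-clique cover number plus the number of isolated vertices. -/
def thetaPrime [Fintype V] (G : SimpleGraph V) : ℕ :=
  edgeCliqueCoverNum G + {v : V | ∀ u, ¬ G.Adj v u}.ncard

/-- `f` is an orthogonal representation of `G` in dimension `d`. -/
def IsOrthRep (G : SimpleGraph V) (d : ℕ) (f : V → EuclideanSpace ℂ (Fin d)) : Prop :=
  (∀ v, ‖f v‖ = 1) ∧ ∀ u v, G.Adj u v → inner ℂ (f u) (f v) = (0 : ℂ)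

/-- The orthogonal rank `ξ(G)`. -/
def orthRank (G : SimpleGraph V) : ℕ :=
  sInf {d | ∃ f : V → EuclideanSpace ℂ (Fin d), IsOrthRep G d f}

/-- Vertices of the quarter orthogonality graph `Γ_k`: ±1-vectors of length `k+1`
with first coordinate 1 and an even number of -1 entries. -/
def QOVertex (k : ℕ) : Type :=
  {u : Fin (k + 1) → ℤ // (∀ i, u i = 1 ∨ u i = -1) ∧ u 0 = 1 ∧
    Even ((Finset.univ.filter fun i => u i = -1).card)}

instance (k : ℕ) : Fintype (QOVertex k) :=
  Fintype.ofInjective (fun u : QOVertex k => fun i => decide (u.val i = 1))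
    (by
      intro u v h
      apply Subtype.ext; funext i
      have hi := congrFun h i
      rcases u.prop.1 i with h1 | h1 <;> rcases v.prop.1 i with h2 | h2 <;>
        simp [h1, h2] at hi ⊢)

/-- The quarter orthogonality graph `Γ_k`. -/
def quarterOrthGraph (k : ℕ) : SimpleGraph (QOVertex k) where
  Adj u v := u ≠ v ∧ ∑ i, u.val i * v.val i = 0
  symm := by
    constructor
    rintro u v ⟨hne, h⟩
    refine ⟨hne.symm, ?_⟩
    rw [← h]
    exact Finset.sum_congr rfl fun i _ => mul_comm _ _
  loopless := by constructor; rintro u ⟨hne, -⟩; exact hne rfl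

/-- Vertices of the orthogonality graph `Ω_k`: all ±1-vectors of length `k`. -/
def PMVertex (k : ℕ) : Type :=
  {u : Fin k → ℤ // ∀ i, u i = 1 ∨ u i = -1}

instance (k : ℕ) : Fintype (PMVertex k) :=
  Fintype.ofInjective (fun u : PMVertex k => fun i => decide (u.val i = 1))
    (by
      intro u v h
      apply Subtype.ext; funext i
      have hi := congrFun h i
      rcases u.prop i with h1 | h1 <;> rcases v.prop i with h2 | h2 <;>
        simp [h1, h2] at hi ⊢)

/-- The orthogonality graph `Ω_k`. -/
def orthGraph (k : ℕ) : SimpleGraph (PMVertex k) where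
  Adj u v := u ≠ v ∧ ∑ i, u.val i * v.val i = 0
  symm := by
    constructor
    rintro u v ⟨hne, h⟩
    refine ⟨hne.symm, ?_⟩
    rw [← h]
    exact Finset.sum_congr rfl fun i _ => mul_comm _ _
  loopless := by constructor; rintro u ⟨hne, -⟩; exact hne rfl



end ZeroError

/-!
The classical bound is attained with `d = 1`. Conversely, since `ℓ ≥ θ'_e(G)` one can choose
cliques `C 0, …, C (ℓ-1)` such that any two equal or adjacent vertices lie in a common clique.
Receiver `k` sees message `i` through `τ k i = ∑_{u ∈ C k} Tr_{B_{-k}} σ_i^u`, and the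
orthogonality conditions make `τ k i` and `τ k j` orthogonal for `i ≠ j`; completing the support
projections of the `τ k i` to a resolution of the identity gives a measurement at receiver `k`
that identifies every message whose vertex lies in `C k`. Measuring all receivers at once yields
an outcome `b` of nonzero probability under `ρ = ∑_u σ_i^u`, hence for every message `i` a vertex
`g i` whose part `σ_i^{g i}` survives `b`. Positivity forces `b k = i` whenever `g i ∈ C k`, so two
messages whose vertices are equal or adjacent coincide: `g` is injective with independent image.
-/

theorem IsStarProjection.sum {ι R : Type*} [NonUnitalNonAssocSemiring R] [StarRing R] {p : ι → R}
    (s : Finset ι) (hp : ∀ i ∈ s, IsStarProjection (p i))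
    (horth : (s : Set ι).Pairwise fun i j => p i * p j = 0) :
    IsStarProjection (∑ i ∈ s, p i) := by
  classical
  induction s using Finset.induction_on with
  | empty => simp
  | insert a s ha ih =>
    rw [Finset.sum_insert ha]
    refine (hp a (Finset.mem_insert_self a s)).add
      (ih (fun i hi => hp i (Finset.mem_insert_of_mem hi)) (horth.mono (by simp))) ?_
    rw [Finset.mul_sum]
    exact Finset.sum_eq_zero fun j hj =>
      horth (by simp) (by simp [hj]) (by rintro rfl; exact ha hj)

namespace Matrix

open scoped MatrixOrder

variable {n : Type*} [Fintype n] {𝕜 : Type*} [RCLike 𝕜]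

lemma trace_conjTranspose_mul_mul_conjTranspose_mul (X Y : Matrix n n 𝕜) :
    (Xᴴ * X * (Yᴴ * Y)).trace = ((X * Yᴴ)ᴴ * (X * Yᴴ)).trace := by
  rw [conjTranspose_mul, conjTranspose_conjTranspose, trace_mul_comm, Matrix.mul_assoc,
    trace_mul_comm]
  simp only [Matrix.mul_assoc]

variable [DecidableEq n]

lemma PosSemidef.exists_eq_conjTranspose_mul_self {A : Matrix n n 𝕜} (hA : A.PosSemidef) :
    ∃ X : Matrix n n 𝕜, A = Xᴴ * X := by
  refine ⟨CFC.sqrt A, ?_⟩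
  rw [← star_eq_conjTranspose, (CFC.sqrt_nonneg A).isSelfAdjoint.star_eq,
    CFC.sqrt_mul_sqrt_self A hA.nonneg]

lemma PosSemidef.trace_mul_nonneg {A B : Matrix n n 𝕜} (hA : A.PosSemidef) (hB : B.PosSemidef) :
    0 ≤ (A * B).trace := by
  obtain ⟨X, rfl⟩ := hA.exists_eq_conjTranspose_mul_self
  obtain ⟨Y, rfl⟩ := hB.exists_eq_conjTranspose_mul_self
  rw [trace_conjTranspose_mul_mul_conjTranspose_mul]
  exact (posSemidef_conjTranspose_mul_self _).trace_nonneg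

lemma PosSemidef.mul_eq_zero_of_trace_mul_eq_zero {A B : Matrix n n 𝕜} (hA : A.PosSemidef)
    (hB : B.PosSemidef) (h : (A * B).trace = 0) : A * B = 0 := by
  obtain ⟨X, rfl⟩ := hA.exists_eq_conjTranspose_mul_self
  obtain ⟨Y, rfl⟩ := hB.exists_eq_conjTranspose_mul_self
  rw [trace_conjTranspose_mul_mul_conjTranspose_mul, trace_conjTranspose_mul_self_eq_zero_iff] at h
  rw [Matrix.mul_assoc, ← Matrix.mul_assoc X, h, Matrix.zero_mul, Matrix.mul_zero]

/-- The orthogonal projection onto the range of a Hermitian matrix. -/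
def supportProj (A : Matrix n n 𝕜) : Matrix n n 𝕜 :=
  cfc (fun x : ℝ => if x = 0 then 0 else 1) A

lemma isStarProjection_supportProj (A : Matrix n n 𝕜) : IsStarProjection (supportProj A) := by
  refine ⟨?_, cfc_predicate _ A⟩
  rw [IsIdempotentElem, supportProj, ← cfc_mul _ _ A (A.finite_real_spectrum.continuousOn _)
    (A.finite_real_spectrum.continuousOn _)]
  congr 1 with x
  split_ifs <;> simp

lemma exists_supportProj_eq_mul {A : Matrix n n 𝕜} (hA : A.IsHermitian) :
    ∃ B : Matrix n n 𝕜, supportProj A = B * A ∧ supportProj A = A * B := by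
  have hc : ∀ f : ℝ → ℝ, ContinuousOn f (spectrum ℝ A) := A.finite_real_spectrum.continuousOn
  have hA' : cfc (fun x : ℝ => x) A = A := cfc_id' ℝ A hA
  -- `0⁻¹ = 0` makes this the Moore–Penrose pseudo-inverse of `A`
  refine ⟨cfc (fun x : ℝ => x⁻¹) A, ?_, ?_⟩
  · calc supportProj A = cfc (fun x : ℝ => x⁻¹ * x) A := by
          rw [supportProj]; congr 1 with x; split_ifs with h <;> simp [h]
      _ = cfc (fun x : ℝ => x⁻¹) A * A := by rw [cfc_mul _ _ A (hc _) (hc _), hA']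
  · calc supportProj A = cfc (fun x : ℝ => x * x⁻¹) A := by
          rw [supportProj]; congr 1 with x; split_ifs with h <;> simp [h]
      _ = A * cfc (fun x : ℝ => x⁻¹) A := by rw [cfc_mul _ _ A (hc _) (hc _), hA']

lemma supportProj_mul_self {A : Matrix n n 𝕜} (hA : A.IsHermitian) : supportProj A * A = A := by
  have hc : ∀ f : ℝ → ℝ, ContinuousOn f (spectrum ℝ A) := A.finite_real_spectrum.continuousOn
  have hA' : cfc (fun x : ℝ => x) A = A := cfc_id' ℝ A hA
  calc supportProj A * A = cfc (fun x : ℝ => (if x = 0 then 0 else 1) * x) A := by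
        rw [cfc_mul _ _ A (hc _) (hc _), hA', supportProj]
    _ = A := by
        conv_rhs => rw [← hA']
        congr 1 with x
        split_ifs with h <;> simp [h]

lemma supportProj_mul_eq_zero {A B : Matrix n n 𝕜} (hA : A.IsHermitian) (h : A * B = 0) :
    supportProj A * B = 0 := by
  obtain ⟨C, hC, -⟩ := exists_supportProj_eq_mul hA
  rw [hC, Matrix.mul_assoc, h, Matrix.mul_zero]

lemma mul_supportProj_eq_zero {A B : Matrix n n 𝕜} (hB : B.IsHermitian) (h : A * B = 0) :
    A * supportProj B = 0 := by
  obtain ⟨C, -, hC⟩ := exists_supportProj_eq_mul hB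
  rw [hC, ← Matrix.mul_assoc, h, Matrix.zero_mul]

section PiKronecker

variable {ι m R : Type*} [Fintype ι]

def piKronecker [CommSemiring R] (B : ι → Matrix m m R) : Matrix (ι → m) (ι → m) R :=
  of fun s t => ∏ k, B k (s k) (t k)

section CommSemiring

variable [CommSemiring R]

lemma piKronecker_apply (B : ι → Matrix m m R) (s t : ι → m) :
    piKronecker B s t = ∏ k, B k (s k) (t k) := rfl

lemma piKronecker_mul [DecidableEq ι] [Fintype m] (B C : ι → Matrix m m R) :
    piKronecker B * piKronecker C = piKronecker (B * C) := by
  ext s t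
  simp only [mul_apply, piKronecker_apply, Pi.mul_apply, Fintype.prod_sum,
    Finset.prod_mul_distrib]

lemma sum_piKronecker [DecidableEq ι] {β : Type*} [Fintype β] (B : ι → β → Matrix m m R) :
    ∑ b : ι → β, piKronecker (fun k => B k (b k)) = piKronecker (fun k => ∑ r, B k r) := by
  ext s t
  simp only [sum_apply, piKronecker_apply, Fintype.prod_sum]

@[simp]
lemma piKronecker_one [DecidableEq m] : piKronecker (1 : ι → Matrix m m R) = 1 := by
  ext s t
  simp only [piKronecker_apply, Pi.one_apply, one_apply, Fintype.prod_boole, funext_iff]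

lemma piKronecker_mulSingle_apply [DecidableEq ι] [DecidableEq m] (k : ι) (B : Matrix m m R)
    (s t : ι → m) :
    piKronecker (Pi.mulSingle k B) s t = if ∀ r ≠ k, s r = t r then B (s k) (t k) else 0 := by
  rw [piKronecker_apply, Fintype.prod_eq_mul_prod_compl k, Pi.mulSingle_eq_same]
  have hcompl : ∏ r ∈ {k}ᶜ, (Pi.mulSingle k B : ι → Matrix m m R) r (s r) (t r)
      = ∏ r ∈ {k}ᶜ, if s r = t r then (1 : R) else 0 :=
    Finset.prod_congr rfl fun r hr => by
      rw [Pi.mulSingle_eq_of_ne (by simpa using hr), one_apply]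
  simp only [hcompl, Finset.prod_boole, Finset.mem_compl, Finset.mem_singleton, mul_ite, mul_one,
    mul_zero]

lemma piKronecker_eq_mul_mulSingle [DecidableEq ι] [Fintype m] [DecidableEq m]
    (B : ι → Matrix m m R) (k : ι) :
    piKronecker B = piKronecker (Function.update B k 1) * piKronecker (Pi.mulSingle k (B k)) := by
  rw [piKronecker_mul]
  congr 1 with r : 1
  by_cases h : r = k
  · subst h; simp
  · simp [h]

end CommSemiring

lemma conjTranspose_piKronecker (B : ι → Matrix m m 𝕜) :
    (piKronecker B)ᴴ = piKronecker (fun k => (B k)ᴴ) := by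
  ext s t
  simp only [conjTranspose_apply, piKronecker_apply, star_prod]

lemma PosSemidef.piKronecker [DecidableEq ι] [Fintype m] [DecidableEq m] {B : ι → Matrix m m 𝕜}
    (hB : ∀ k, (B k).PosSemidef) :
    (piKronecker B).PosSemidef := by
  choose X hX using fun k => (hB k).exists_eq_conjTranspose_mul_self
  rw [show B = (fun k => (X k)ᴴ) * X from funext hX, ← piKronecker_mul,
    ← conjTranspose_piKronecker]
  exact posSemidef_conjTranspose_mul_self _

end PiKronecker

theorem exists_measurement_of_pairwise_mul_eq_zero {ι : Type*} [Fintype ι]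
    {τ : ι → Matrix n n 𝕜} (hτ : ∀ i, (τ i).IsHermitian)
    (horth : Pairwise fun i j => τ i * τ j = 0) :
    ∃ E : Option ι → Matrix n n 𝕜, (∀ o, (E o).PosSemidef) ∧ ∑ o, E o = 1 ∧
      ∀ o i, o ≠ some i → E o * τ i = 0 := by
  set P := fun i => supportProj (τ i)
  have hPτ : ∀ i j, i ≠ j → P i * τ j = 0 := fun i j hij =>
    supportProj_mul_eq_zero (hτ i) (horth hij)
  have hPP : Pairwise fun i j => P i * P j = 0 := fun i j hij =>
    mul_supportProj_eq_zero (hτ j) (hPτ i j hij)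
  have hsum : IsStarProjection (∑ i, P i) :=
    IsStarProjection.sum _ (fun i _ => isStarProjection_supportProj _) fun i _ j _ hij => hPP hij
  refine ⟨fun o => o.elim (1 - ∑ i, P i) P, ?_, by simp [Fintype.sum_option], ?_⟩
  · rintro (_ | i)
    · exact nonneg_iff_posSemidef.mp hsum.one_sub.nonneg
    · exact nonneg_iff_posSemidef.mp (isStarProjection_supportProj _).nonneg
  · rintro (_ | j) i hji
    · change (1 - ∑ j, P j) * τ i = 0
      rw [Matrix.sub_mul, Matrix.one_mul, Finset.sum_mul,
        Finset.sum_eq_single i (fun j _ hj => hPτ j i hj) (by simp),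
        supportProj_mul_self (hτ i), sub_self]
    · exact hPτ j i (by rintro rfl; exact hji rfl)

theorem exists_trace_piKronecker_mul_ne_zero {ι β m R : Type*} [Fintype ι] [DecidableEq ι]
    [Fintype β] [Fintype m] [DecidableEq m] [CommRing R] {E : ι → β → Matrix m m R}
    (hE : ∀ k, ∑ b, E k b = 1) {ρ : Matrix (ι → m) (ι → m) R} (hρ : ρ.trace ≠ 0) :
    ∃ b : ι → β, (piKronecker (fun k => E k (b k)) * ρ).trace ≠ 0 := by
  by_contra! h
  apply hρ
  calc ρ.trace = (∑ b : ι → β, piKronecker (fun k => E k (b k)) * ρ).trace := by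
        rw [← Finset.sum_mul, sum_piKronecker, show (fun k => ∑ r, E k r) = 1 from funext hE,
          piKronecker_one, Matrix.one_mul]
    _ = 0 := by rw [trace_sum]; exact Finset.sum_eq_zero fun b _ => h b

end Matrix

theorem Finset.exists_fin_subset_range_subset_insert {α : Type*} (s : Finset α) (a : α) {ℓ : ℕ}
    (h : s.card ≤ ℓ) : ∃ f : Fin ℓ → α, ↑s ⊆ Set.range f ∧ Set.range f ⊆ insert a ↑s := by
  refine ⟨fun k => s.toList.getD k a, fun x hx => ?_, ?_⟩
  · obtain ⟨i, hi, rfl⟩ := List.mem_iff_getElem.mp (Finset.mem_toList.mpr hx)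
    exact ⟨⟨i, hi.trans_le (s.length_toList ▸ h)⟩, List.getD_eq_getElem _ _ hi⟩
  · rintro _ ⟨k, rfl⟩
    by_cases hk : k.val < s.toList.length
    · simp only [List.getD_eq_getElem _ _ hk]
      exact Set.mem_insert_of_mem _ (Finset.mem_toList.mp (List.getElem_mem hk))
    · simp only [List.getD_eq_default _ _ (not_lt.mp hk)]
      exact Set.mem_insert a _

namespace ZeroError

section PartialTrace

variable {d ℓ : ℕ}

lemma ptraceK_zero (k : Fin ℓ) : ptraceK k (0 : Matrix (Fin ℓ → Fin d) (Fin ℓ → Fin d) ℂ) = 0 := by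
  ext
  simp [ptraceK]

lemma isHermitian_ptraceK (k : Fin ℓ) {M : Matrix (Fin ℓ → Fin d) (Fin ℓ → Fin d) ℂ}
    (hM : M.IsHermitian) : (ptraceK k M).IsHermitian := by
  ext a b
  simp only [conjTranspose_apply, ptraceK, of_apply, star_sum, apply_ite star, star_zero]
  rw [Finset.sum_comm]
  refine Finset.sum_congr rfl fun s _ => Finset.sum_congr rfl fun t _ => ?_
  rw [← conjTranspose_apply M, hM.eq]
  refine if_congr ?_ rfl rfl
  grind

lemma trace_piKronecker_mulSingle_mul (k : Fin ℓ) (B : Matrix (Fin d) (Fin d) ℂ)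
    (M : Matrix (Fin ℓ → Fin d) (Fin ℓ → Fin d) ℂ) :
    (piKronecker (Pi.mulSingle k B) * M).trace = (B * ptraceK k M).trace := by
  simp only [trace, diag, mul_apply, piKronecker_mulSingle_apply, ptraceK, of_apply,
    Finset.mul_sum, mul_ite, mul_zero, ite_mul, zero_mul]
  -- move the sums over `Fin d` innermost, where they collapse
  simp only [Finset.sum_comm (γ := Fin d) (α := Fin ℓ → Fin d), ite_and, Finset.sum_ite_eq,
    Finset.mem_univ, if_true]
  rw [Finset.sum_comm]
  refine Finset.sum_congr rfl fun s _ => Finset.sum_congr rfl fun t _ => if_congr ?_ rfl rfl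
  grind

theorem piKronecker_mul_eq_zero_of_mul_sum_ptraceK_eq_zero {ι : Type*}
    {Q : Fin ℓ → Matrix (Fin d) (Fin d) ℂ} (hQ : ∀ r, (Q r).PosSemidef) (k : Fin ℓ)
    {s : Finset ι} {σ : ι → Matrix (Fin ℓ → Fin d) (Fin ℓ → Fin d) ℂ}
    (hσ : ∀ u ∈ s, (σ u).PosSemidef) (h : Q k * ∑ u ∈ s, ptraceK k (σ u) = 0)
    {u : ι} (hu : u ∈ s) : piKronecker Q * σ u = 0 := by
  set L := piKronecker (Pi.mulSingle k (Q k))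
  have hL : L.PosSemidef := PosSemidef.piKronecker fun r => by
    rcases eq_or_ne r k with rfl | hr
    · simpa using hQ r
    · simpa [Pi.mulSingle_eq_of_ne hr] using PosSemidef.one
  have htrace : ∑ v ∈ s, (L * σ v).trace = 0 := by
    simp only [L, trace_piKronecker_mulSingle_mul]
    rw [← trace_sum, ← Finset.mul_sum, h, trace_zero]
  have hLσ : (L * σ u).trace = 0 :=
    (Finset.sum_eq_zero_iff_of_nonneg fun v hv => hL.trace_mul_nonneg (hσ v hv)).mp htrace u hu
  rw [piKronecker_eq_mul_mulSingle Q k, Matrix.mul_assoc,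
    hL.mul_eq_zero_of_trace_mul_eq_zero (hσ u hu) hLσ, Matrix.mul_zero]

end PartialTrace

section CliqueCover

variable {V : Type*} [Fintype V] (G : SimpleGraph V)

lemma exists_edgeCliqueCover :
    ∃ F : Finset (Finset V), F.card = edgeCliqueCoverNum G ∧ (∀ c ∈ F, G.IsClique (c : Set V)) ∧
      ∀ u v, G.Adj u v → ∃ c ∈ F, u ∈ c ∧ v ∈ c := by
  classical
  set edges := (Finset.univ.filter fun p : V × V => G.Adj p.1 p.2).image
    fun p => ({p.1, p.2} : Finset V)
  refine Nat.sInf_mem (s := {n | ∃ F : Finset (Finset V), F.card = n ∧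
    (∀ c ∈ F, G.IsClique (c : Set V)) ∧ ∀ u v, G.Adj u v → ∃ c ∈ F, u ∈ c ∧ v ∈ c})
    ⟨_, edges, rfl, ?_, fun u v huv => ⟨{u, v}, ?_, by simp⟩⟩
  · simp only [edges, Finset.mem_image, Finset.mem_filter, Finset.mem_univ, true_and]
    rintro _ ⟨p, hp, rfl⟩
    rw [Finset.coe_pair, SimpleGraph.isClique_pair]
    exact fun _ => hp
  · exact Finset.mem_image.mpr ⟨(u, v), by simpa using huv, rfl⟩

lemma exists_finset_cliques_covering_of_card_le_thetaPrime :
    ∃ F : Finset (Finset V), F.card ≤ thetaPrime G ∧ (∀ c ∈ F, G.IsClique (c : Set V)) ∧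
      ∀ u v, (u = v ∨ G.Adj u v) → ∃ c ∈ F, u ∈ c ∧ v ∈ c := by
  classical
  obtain ⟨F, hFcard, hFclique, hFcover⟩ := exists_edgeCliqueCover G
  set I := Finset.univ.filter fun v => ∀ u, ¬ G.Adj v u
  have hIcard : I.card = {v : V | ∀ u, ¬ G.Adj v u}.ncard := by
    rw [Set.ncard_eq_toFinset_card', Set.toFinset_ofPred]
  refine ⟨F ∪ I.image ({·}), ?_, ?_, ?_⟩
  · calc (F ∪ I.image ({·})).card ≤ F.card + I.card :=
          (Finset.card_union_le _ _).trans (Nat.add_le_add_left Finset.card_image_le _)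
      _ = thetaPrime G := by rw [hFcard, hIcard, thetaPrime]
  · simp only [Finset.mem_union, Finset.mem_image]
    rintro c (hc | ⟨v, -, rfl⟩)
    · exact hFclique c hc
    · simp
  · rintro u v (rfl | huv)
    · by_cases hu : ∃ w, G.Adj u w
      · obtain ⟨w, huw⟩ := hu
        obtain ⟨c, hc, huc, -⟩ := hFcover u w huw
        exact ⟨c, Finset.mem_union_left _ hc, huc, huc⟩
      · exact ⟨{u}, Finset.mem_union_right _ (Finset.mem_image_of_mem _ (by simpa [I] using hu)),
          by simp⟩
    · obtain ⟨c, hc, huc, hvc⟩ := hFcover u v huv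
      exact ⟨c, Finset.mem_union_left _ hc, huc, hvc⟩

lemma exists_cliques_covering_of_thetaPrime_le {ℓ : ℕ} (h : thetaPrime G ≤ ℓ) :
    ∃ C : Fin ℓ → Finset V, (∀ k, G.IsClique (C k : Set V)) ∧
      ∀ u v, (u = v ∨ G.Adj u v) → ∃ k, u ∈ C k ∧ v ∈ C k := by
  obtain ⟨F, hFcard, hFclique, hFcover⟩ := exists_finset_cliques_covering_of_card_le_thetaPrime G
  obtain ⟨C, hFC, hCF⟩ := F.exists_fin_subset_range_subset_insert ∅ (hFcard.trans h)
  refine ⟨C, fun k => ?_, fun u v huv => ?_⟩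
  · rcases hCF ⟨k, rfl⟩ with hk | hk
    · simp [hk]
    · exact hFclique _ hk
  · obtain ⟨c, hc, huc, hvc⟩ := hFcover u v huv
    obtain ⟨k, rfl⟩ := hFC hc
    exact ⟨k, huc, hvc⟩

end CliqueCover

open SimpleGraph

def IsCompoundCode {V : Type*} [Fintype V] (G : SimpleGraph V) (ℓ m : ℕ) : Prop :=
  ∃ (d : ℕ) (ρ : Matrix (Fin ℓ → Fin d) (Fin ℓ → Fin d) ℂ)
      (σ : Fin m → V → Matrix (Fin ℓ → Fin d) (Fin ℓ → Fin d) ℂ),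
    ρ.PosSemidef ∧ ρ.trace = 1 ∧ (∀ i u, (σ i u).PosSemidef) ∧
    (∀ i, ∑ u, σ i u = ρ) ∧
    ∀ (k : Fin ℓ) i j u v, i ≠ j → (u = v ∨ G.Adj u v) →
      ptraceK k (σ i u) * ptraceK k (σ j v) = 0

section CompoundCode

variable {V : Type*} [Fintype V] {G : SimpleGraph V} {ℓ d m : ℕ}

theorem card_le_indepNum_of_cliques_covering (C : Fin ℓ → Finset V)
    (hC : ∀ k, G.IsClique (C k : Set V))
    (hcover : ∀ u v, (u = v ∨ G.Adj u v) → ∃ k, u ∈ C k ∧ v ∈ C k)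
    {ρ : Matrix (Fin ℓ → Fin d) (Fin ℓ → Fin d) ℂ} (hρ : ρ.trace = 1)
    {σ : Fin m → V → Matrix (Fin ℓ → Fin d) (Fin ℓ → Fin d) ℂ} (hσ : ∀ i u, (σ i u).PosSemidef)
    (hsum : ∀ i, ∑ u, σ i u = ρ)
    (horth : ∀ (k : Fin ℓ) i j u v, i ≠ j → (u = v ∨ G.Adj u v) →
      ptraceK k (σ i u) * ptraceK k (σ j v) = 0) :
    m ≤ G.indepNum := by
  classical
  set τ : Fin ℓ → Fin m → Matrix (Fin d) (Fin d) ℂ := fun k i => ∑ u ∈ C k, ptraceK k (σ i u)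
  have hτ : ∀ k i, (τ k i).IsHermitian := fun k i =>
    isSelfAdjoint_sum _ fun u _ => isHermitian_ptraceK k (hσ i u).1
  have hτorth : ∀ k, Pairwise fun i j => τ k i * τ k j = 0 := fun k i j hij => by
    simp only [τ, Finset.sum_mul_sum]
    refine Finset.sum_eq_zero fun u hu => Finset.sum_eq_zero fun v hv => horth k i j u v hij ?_
    exact or_iff_not_imp_left.mpr (hC k hu hv)
  choose E hEpsd hEsum hEτ using
    fun k => exists_measurement_of_pairwise_mul_eq_zero (hτ k) (hτorth k)
  obtain ⟨b, hb⟩ := exists_trace_piKronecker_mul_ne_zero hEsum (hρ ▸ one_ne_zero)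
  have hpick : ∀ i, ∃ u, (piKronecker (fun k => E k (b k)) * σ i u).trace ≠ 0 := fun i => by
    by_contra! h
    rw [← hsum i, Finset.mul_sum, trace_sum, Finset.sum_eq_zero fun u _ => h u] at hb
    exact hb rfl
  choose g hg using hpick
  have hkey : ∀ k i, g i ∈ C k → b k = some i := fun k i hik => by
    by_contra hne
    exact hg i (by rw [piKronecker_mul_eq_zero_of_mul_sum_ptraceK_eq_zero (fun r => hEpsd r (b r))
      k (fun u _ => hσ i u) (hEτ k (b k) i hne) hik, trace_zero])
  have hsame : ∀ i j, (g i = g j ∨ G.Adj (g i) (g j)) → i = j := fun i j h => by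
    obtain ⟨k, hik, hjk⟩ := hcover _ _ h
    exact Option.some_injective _ ((hkey k i hik).symm.trans (hkey k j hjk))
  have hinj : Function.Injective g := fun i j h => hsame i j (Or.inl h)
  calc m = (Finset.univ.image g).card := by
        rw [Finset.card_image_of_injective _ hinj, Finset.card_fin]
    _ ≤ G.indepNum := IsIndepSet.card_le_indepNum ?_
  simp only [Finset.coe_image, Finset.coe_univ, Set.image_univ]
  rintro _ ⟨i, rfl⟩ _ ⟨j, rfl⟩ hij hadj
  exact hij (congrArg g (hsame i j (Or.inr hadj)))

lemma qCompoundNum_eq_sSup : qCompoundNum G ℓ = sSup {m | IsCompoundCode G ℓ m} := rfl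

lemma indepNum_eq_simpleGraph_indepNum : indepNum G = G.indepNum := by
  simp only [indepNum, SimpleGraph.indepNum, isNIndepSet_iff, and_comm]
  rfl

theorem IsCompoundCode.le_indepNum (hℓ : thetaPrime G ≤ ℓ) (h : IsCompoundCode G ℓ m) :
    m ≤ G.indepNum := by
  obtain ⟨C, hC, hcover⟩ := exists_cliques_covering_of_thetaPrime_le G hℓ
  obtain ⟨d, ρ, σ, -, hρ, hσ, hsum, horth⟩ := h
  exact card_le_indepNum_of_cliques_covering C hC hcover hρ hσ hsum horth

theorem isCompoundCode_of_isNIndepSet {s : Finset V} (hs : G.IsNIndepSet m s) :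
    IsCompoundCode G ℓ m := by
  classical
  set e := s.equivFinOfCardEq hs.card_eq
  set w : Fin m → V := fun i => e.symm i
  have hw : Function.Injective w := fun i j h => e.symm.injective (Subtype.ext h)
  refine ⟨1, 1, fun i u => if u = w i then 1 else 0, PosSemidef.one, by simp, fun i u => ?_,
    fun i => by simp, fun k i j u v hij huv => ?_⟩
  · dsimp only
    split_ifs
    exacts [PosSemidef.one, PosSemidef.zero]
  · dsimp only
    by_cases hu : u = w i
    · by_cases hv : v = w j
      · subst hu hv
        have hne : w i ≠ w j := hw.ne hij
        exact (hs.isIndepSet (e.symm i).2 (e.symm j).2 hne (huv.resolve_left hne)).elim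
      · simp [hv, ptraceK_zero]
    · simp [hu, ptraceK_zero]

end CompoundCode

/-- For every finite simple graph `G` and every `ℓ ≥ θ'_e(G)`, the
entanglement-assisted compound independence number with ℓ receivers equals the
classical independence number: `α*_{1,ℓ}(G) = α(G)`. -/
theorem entangled_compound_eq_classical_of_many_receivers
    {V : Type} [Fintype V] (G : SimpleGraph V) (ℓ : ℕ)
    (hℓ : thetaPrime G ≤ ℓ) :
    qCompoundNum G ℓ = indepNum G := by
  obtain ⟨s, hs⟩ := G.exists_isNIndepSet_indepNum
  have hcode : IsCompoundCode G ℓ G.indepNum := isCompoundCode_of_isNIndepSet hs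
  have hbound : ∀ m ∈ {m | IsCompoundCode G ℓ m}, m ≤ G.indepNum := fun m hm => hm.le_indepNum hℓ
  rw [qCompoundNum_eq_sSup, indepNum_eq_simpleGraph_indepNum]
  exact le_antisymm (csSup_le ⟨_, hcode⟩ hbound) (le_csSup ⟨_, hbound⟩ hcode)

end ZeroError
end
end

section
/- Let G be a finite simple graph, let C be a collection of subsets of V(G) with |C| = θ'_e(G) consisting of a minimum-cardinality family of cliques covering all edges of G together with the singleton of each isolated vertex, and let ℓ ≥ θ'_e(G). Then the maximum m ∈ ℕ for which there exists an (ℓ+1)-partite non-signaling conditional probability distribution P(v, î_1, …, î_ℓ | i, c_1, …, c_ℓ) — where Alice's input i and each Bob's output î_k range over [m], Alice's output v ranges over V(G), each Bob's input c_k ranges over C — such that P(v, î_1, …, î_ℓ | i, c_1, …, c_ℓ) = 0 whenever v ∈ c_k for all k ∈ [ℓ] and î_{k'} ≠ i for some k' ∈ [ℓ], is exactly the independence number α(G). -/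
open scoped BigOperators

noncomputable section

namespace ZeroError

variable {V : Type*}

/-- The marginal of the outputs of the selected parties: Alice (output in `V`) is selected
iff `sA = true`, and the Bobs (outputs in `Fin m`) in `S` are selected; we sum `P` over all
outputs which agree with `v₀` (resp. `b₀`) on the selected parties. -/
def nsMarg {m ℓ : ℕ} {V Ct : Type*} [Fintype V] [DecidableEq V] [Fintype Ct]
    (P : Fin m → (Fin ℓ → Ct) → V → (Fin ℓ → Fin m) → ℝ)
    (i : Fin m) (c : Fin ℓ → Ct) (sA : Bool) (S : Finset (Fin ℓ))
    (v₀ : V) (b₀ : Fin ℓ → Fin m) : ℝ :=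
  ∑ v : V, ∑ b : Fin ℓ → Fin m,
    if (sA = true → v = v₀) ∧ ∀ k ∈ S, b k = b₀ k then P i c v b else 0

/-- `P` is an (ℓ+1)-partite non-signaling conditional probability distribution, for one
Alice (input in `Fin m`, output in `V`) and ℓ Bobs (inputs in `Ct`, outputs in `Fin m`):
it is nonnegative, normalized, and for every subset of the parties the marginal
distribution of their outputs depends only on the corresponding inputs. -/
def IsNSCompound {m ℓ : ℕ} {V Ct : Type*} [Fintype V] [DecidableEq V] [Fintype Ct]
    (P : Fin m → (Fin ℓ → Ct) → V → (Fin ℓ → Fin m) → ℝ) : Prop :=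
  (∀ i c v b, 0 ≤ P i c v b) ∧
  (∀ i c, (∑ v : V, ∑ b : Fin ℓ → Fin m, P i c v b) = 1) ∧
  ∀ (sA : Bool) (S : Finset (Fin ℓ)) (i i' : Fin m) (c c' : Fin ℓ → Ct),
    (sA = true → i = i') → (∀ k ∈ S, c k = c' k) →
    ∀ v₀ b₀, nsMarg P i c sA S v₀ b₀ = nsMarg P i' c' sA S v₀ b₀

/-!
Lower bound: take a maximum independent set `{e₀, …, e_{α-1}}`; a clique contains at most one
`e_j`. With shared randomness `j` uniform on `Fin α`, Alice outputs `e_j` and a Bob holding the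
clique `c` outputs `i + j - j_c`, where `e_{j_c} ∈ c`. Without Alice the outputs depend on `i + j`
only, which is uniform whatever `i` is, so the box is non-signaling; it is correct because
`e_j ∈ c` forces `j_c = j`.

Upper bound: give the Bobs an input `σ` listing every member of `C` (possible since `|C| ≤ ℓ`).
Comparing with the input in which all Bobs hold `σ k`, non-signaling between Alice and Bob `k`
shows that Bob `k` answers `i` whenever Alice's vertex lies in `σ k`. So for fixed Bob outputs `b`
the Alice inputs `i` compatible with `b` have witnesses that are pairwise distinct and
non-adjacent: there are at most `α` of them. Since the Bobs' marginal `Q b` does not depend on `i`,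
`m = ∑ᵢ ∑_b P(b | i) ≤ α ∑_b Q b = α`.
-/

open Finset

theorem indepNum_eq_indepNum [Fintype V] (G : SimpleGraph V) : indepNum G = G.indepNum := by
  simp only [indepNum, SimpleGraph.indepNum, SimpleGraph.isNIndepSet_iff,
    SimpleGraph.IsIndepSet, Set.Pairwise, Finset.mem_coe, and_comm]

theorem exists_mem_mem_of_cover {G : SimpleGraph V} {C : Finset (Finset V)}
    (hcover : ∀ u v, G.Adj u v → ∃ c ∈ C, u ∈ c ∧ v ∈ c)
    (hiso : ∀ v : V, (∀ u, ¬ G.Adj v u) → {v} ∈ C) (u v : V) (huv : u = v ∨ G.Adj u v) :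
    ∃ c ∈ C, u ∈ c ∧ v ∈ c := by
  rcases huv with rfl | hadj
  · by_cases hu : ∀ w, ¬ G.Adj u w
    · exact ⟨{u}, hiso u hu, mem_singleton_self u, mem_singleton_self u⟩
    · push Not at hu
      obtain ⟨w, hw⟩ := hu
      obtain ⟨c, hc, huc, -⟩ := hcover u w hw
      exact ⟨c, hc, huc, huc⟩
  · exact hcover u v hadj

def IsZeroError {m ℓ : ℕ} {C : Finset (Finset V)}
    (P : Fin m → (Fin ℓ → {c // c ∈ C}) → V → (Fin ℓ → Fin m) → ℝ) : Prop :=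
  ∀ i c v b, (∀ k : Fin ℓ, v ∈ (c k).val) → (∃ k', b k' ≠ i) → P i c v b = 0

def zeroErrorSizes [Fintype V] [DecidableEq V] (C : Finset (Finset V)) (ℓ : ℕ) : Set ℕ :=
  {m | ∃ P : Fin m → (Fin ℓ → {c // c ∈ C}) → V → (Fin ℓ → Fin m) → ℝ,
    IsNSCompound P ∧ IsZeroError P}

theorem zeroErrorSizes_eq_univ [Fintype V] [DecidableEq V] {C : Finset (Finset V)} {ℓ : ℕ}
    [IsEmpty (Fin ℓ → {c // c ∈ C})] : zeroErrorSizes C ℓ = Set.univ :=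
  Set.eq_univ_of_forall fun _ => ⟨fun _ _ _ _ => 0,
    ⟨fun _ c => isEmptyElim c, fun _ c => isEmptyElim c, fun _ _ _ _ c => isEmptyElim c⟩,
    fun _ c => isEmptyElim c⟩

section Construction

variable {m ℓ : ℕ} {Ct : Type*} [Fintype V] [DecidableEq V]

def shiftDist (e : Fin m → V) (bob : Ct → Fin m → Fin m) (i : Fin m) (c : Fin ℓ → Ct) (v : V)
    (b : Fin ℓ → Fin m) : ℝ :=
  (m : ℝ)⁻¹ * ∑ j : Fin m, if e j = v ∧ (fun k => bob (c k) (i + j)) = b then 1 else 0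

theorem sum_ite_shiftDist (e : Fin m → V) (bob : Ct → Fin m → Fin m) (i : Fin m)
    (c : Fin ℓ → Ct) (F : V → (Fin ℓ → Fin m) → Prop) [∀ v b, Decidable (F v b)] :
    ∑ v : V, ∑ b : Fin ℓ → Fin m, (if F v b then shiftDist e bob i c v b else 0) =
      (m : ℝ)⁻¹ * ∑ j, if F (e j) (fun k => bob (c k) (i + j)) then 1 else 0 := by
  have hpoint (v : V) (b : Fin ℓ → Fin m) : (if F v b then shiftDist e bob i c v b else 0) =
      (m : ℝ)⁻¹ * ∑ j, if e j = v then if (fun k => bob (c k) (i + j)) = b then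
        if F v b then 1 else 0 else 0 else 0 := by
    unfold shiftDist
    split_ifs <;> simp_all [ite_and]
  simp only [hpoint, ← mul_sum]
  rw [sum_congr rfl fun v _ => sum_comm, sum_comm]
  simp

theorem nsMarg_shiftDist [Fintype Ct] (e : Fin m → V) (bob : Ct → Fin m → Fin m) (i : Fin m)
    (c : Fin ℓ → Ct) (sA : Bool) (S : Finset (Fin ℓ)) (v₀ : V) (b₀ : Fin ℓ → Fin m) :
    nsMarg (shiftDist e bob) i c sA S v₀ b₀ =
      (m : ℝ)⁻¹ * ∑ j, if (sA = true → e j = v₀) ∧ ∀ k ∈ S, bob (c k) (i + j) = b₀ k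
        then 1 else 0 :=
  sum_ite_shiftDist e bob i c _

theorem isNSCompound_shiftDist [Fintype Ct] (e : Fin m → V) (bob : Ct → Fin m → Fin m) :
    IsNSCompound (ℓ := ℓ) (shiftDist e bob) := by
  refine ⟨fun i c v b => by unfold shiftDist; positivity, fun i c => ?_,
    fun sA S i i' c c' hi hc v₀ b₀ => ?_⟩
  · have hm : (m : ℝ) ≠ 0 := Nat.cast_ne_zero.mpr (NeZero.of_pos i.pos).out
    simpa [hm] using sum_ite_shiftDist e bob i c (fun _ _ => True)
  · have hbobs (t : Fin m) :
        (∀ k ∈ S, bob (c k) t = b₀ k) ↔ ∀ k ∈ S, bob (c' k) t = b₀ k :=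
      forall₂_congr fun k hk => by rw [hc k hk]
    rw [nsMarg_shiftDist, nsMarg_shiftDist]
    simp only [hbobs]
    cases sA with
    | true => rw [hi rfl]
    | false =>
      have : NeZero m := .of_pos i.pos
      simp only [Bool.false_eq_true, false_imp_iff, true_and]
      let g (t : Fin m) : ℝ := if ∀ k ∈ S, bob (c' k) t = b₀ k then 1 else 0
      exact congrArg _ ((Equiv.sum_comp (Equiv.addLeft i) g).trans
        (Equiv.sum_comp (Equiv.addLeft i') g).symm)

omit [Fintype V] in
theorem isZeroError_shiftDist {C : Finset (Finset V)} (e : Fin m → V)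
    (bob : {c // c ∈ C} → Fin m → Fin m) (hbob : ∀ i j c, e j ∈ c.val → bob c (i + j) = i) :
    IsZeroError (ℓ := ℓ) (shiftDist e bob) := by
  rintro i c v b hv ⟨k, hk⟩
  refine mul_eq_zero_of_right _ (sum_eq_zero fun j _ => if_neg ?_)
  rintro ⟨rfl, rfl⟩
  exact hk (hbob i j (c k) (hv k))

theorem card_mem_zeroErrorSizes_of_isIndepSet {C : Finset (Finset V)} {G : SimpleGraph V}
    (hclique : ∀ c ∈ C, G.IsClique (c : Set V)) {s : Finset V} (hs : G.IsIndepSet s) :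
    #s ∈ zeroErrorSizes C ℓ := by
  let e (j : Fin #s) : V := s.equivFin.symm j
  have he_inj (j j' : Fin #s) (c : {c // c ∈ C}) (hj : e j ∈ c.val) (hj' : e j' ∈ c.val) :
      j = j' := by
    by_contra hne
    have hne' : e j ≠ e j' := fun h => hne (s.equivFin.symm.injective (Subtype.ext h))
    exact hs (s.equivFin.symm j).2 (s.equivFin.symm j').2 hne' (hclique _ c.2 hj hj' hne')
  let bob (c : {c // c ∈ C}) (t : Fin #s) : Fin #s :=
    if h : ∃ j, e j ∈ c.val then t - h.choose else t
  refine ⟨shiftDist e bob, isNSCompound_shiftDist e bob,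
    isZeroError_shiftDist e bob fun i j c hj => ?_⟩
  have h : ∃ j, e j ∈ c.val := ⟨j, hj⟩
  have : NeZero #s := .of_pos j.pos
  simp only [bob, dif_pos h, he_inj _ _ c h.choose_spec hj, add_sub_cancel_right]

end Construction

section UpperBound

variable {m ℓ : ℕ} {Ct : Type*} [Fintype V] [DecidableEq V] [Fintype Ct]
  {P : Fin m → (Fin ℓ → Ct) → V → (Fin ℓ → Fin m) → ℝ}

theorem nsMarg_false_univ (i : Fin m) (c : Fin ℓ → Ct) (v₀ : V) (b₀ : Fin ℓ → Fin m) :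
    nsMarg P i c false univ v₀ b₀ = ∑ v, P i c v b₀ := by
  simp [nsMarg, ← funext_iff]

theorem single_le_nsMarg {i : Fin m} {c : Fin ℓ → Ct} (hP : ∀ v b, 0 ≤ P i c v b) (sA : Bool)
    (S : Finset (Fin ℓ)) (v₀ : V) (b₀ : Fin ℓ → Fin m) : P i c v₀ b₀ ≤ nsMarg P i c sA S v₀ b₀ := by
  have hterm (v b) :
      0 ≤ if (sA = true → v = v₀) ∧ ∀ k ∈ S, b k = b₀ k then P i c v b else 0 :=
    ite_nonneg (hP v b) le_rfl
  refine le_trans ?_ (single_le_sum (fun v _ => sum_nonneg fun b _ => hterm v b) (mem_univ v₀))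
  refine le_trans ?_ (single_le_sum (fun b _ => hterm v₀ b) (mem_univ b₀))
  simp

theorem IsNSCompound.bobMarginal_eq (hP : IsNSCompound P) (i i' : Fin m) (c : Fin ℓ → Ct)
    (b : Fin ℓ → Fin m) : ∑ v, P i c v b = ∑ v, P i' c v b := by
  cases isEmpty_or_nonempty V with
  | inl => simp
  | inr h =>
    obtain ⟨v₀⟩ := h
    simpa only [nsMarg_false_univ] using
      hP.2.2 false univ i i' c c (by simp) (fun _ _ => rfl) v₀ b

theorem IsZeroError.eq_zero_of_mem {C : Finset (Finset V)}
    {P : Fin m → (Fin ℓ → {c // c ∈ C}) → V → (Fin ℓ → Fin m) → ℝ} (hZ : IsZeroError P)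
    (hP : IsNSCompound P) {i : Fin m} {c : Fin ℓ → {c // c ∈ C}} {v : V} {b : Fin ℓ → Fin m}
    {k : Fin ℓ} (hv : v ∈ (c k).val) (hb : b k ≠ i) : P i c v b = 0 := by
  -- Alice and Bob `k` cannot tell `c` from the input in which every Bob holds `c k`.
  have hmarg : nsMarg P i (fun _ => c k) true {k} v b = 0 := by
    refine sum_eq_zero fun v' _ => sum_eq_zero fun b' _ => ite_eq_right_iff.mpr ?_
    rintro ⟨hv', hb'⟩
    exact hZ i _ v' b' (fun _ => hv' rfl ▸ hv) ⟨k, (hb' k (mem_singleton_self k)).trans_ne hb⟩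
  have hle := single_le_nsMarg (hP.1 i c) true {k} v b
  rw [hP.2.2 true {k} i i c (fun _ => c k) (fun _ => rfl) (by simp) v b, hmarg] at hle
  exact le_antisymm hle (hP.1 i c v b)

theorem card_le_indepNum_of_separated {ι : Type*} {G : SimpleGraph V} (R : ι → V → Prop)
    {D : Finset ι} (hD : ∀ i ∈ D, ∃ v, R i v)
    (hR : ∀ i j u v, R i u → R j v → u = v ∨ G.Adj u v → i = j) : #D ≤ G.indepNum := by
  choose f hf using fun i : D => hD i i.2
  have hinj : Function.Injective f := fun i j h => Subtype.ext (hR _ _ _ _ (hf i) (hf j) (.inl h))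
  rw [← card_attach, ← card_image_of_injective _ hinj]
  refine SimpleGraph.IsIndepSet.card_le_indepNum fun _ hu _ hw hne hadj => ?_
  obtain ⟨i, -, rfl⟩ := mem_image.mp hu
  obtain ⟨j, -, rfl⟩ := mem_image.mp hw
  exact hne (congrArg f (Subtype.ext (hR _ _ _ _ (hf i) (hf j) (.inr hadj))))

theorem le_indepNum_of_mem_zeroErrorSizes {C : Finset (Finset V)} {G : SimpleGraph V}
    {σ : Fin ℓ → {c // c ∈ C}}
    (hσ : ∀ u v, u = v ∨ G.Adj u v → ∃ k, u ∈ (σ k).val ∧ v ∈ (σ k).val)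
    (hm : m ∈ zeroErrorSizes C ℓ) : m ≤ G.indepNum := by
  obtain ⟨P, hP, hZ⟩ := hm
  rcases m.eq_zero_or_pos with rfl | hpos
  · exact Nat.zero_le _
  let i₀ : Fin m := ⟨0, hpos⟩
  have hdecode {i v b} (h : P i σ v b ≠ 0) {k} (hv : v ∈ (σ k).val) : b k = i :=
    not_not.mp fun hne => h (hZ.eq_zero_of_mem hP hv hne)
  let D (b : Fin ℓ → Fin m) : Finset (Fin m) := {i | ∃ v, P i σ v b ≠ 0}
  have hD (b) : #(D b) ≤ G.indepNum :=
    card_le_indepNum_of_separated (fun i v => P i σ v b ≠ 0) (fun i hi => (mem_filter.mp hi).2)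
      fun i j u v hu hv huv => by
        obtain ⟨k, huk, hvk⟩ := hσ u v huv
        exact (hdecode hu huk).symm.trans (hdecode hv hvk)
  have hcol (b) : ∑ i, ∑ v, P i σ v b = #(D b) * ∑ v, P i₀ σ v b := by
    rw [← sum_filter_of_ne fun i _ h => exists_ne_zero_of_sum_ne_zero h |>.imp fun v => And.right,
      sum_congr rfl fun i _ => hP.bobMarginal_eq i i₀ σ b, sum_const, nsmul_eq_mul]
  have : (m : ℝ) ≤ G.indepNum := calc
    (m : ℝ) = ∑ i : Fin m, ∑ v, ∑ b, P i σ v b := by simp [hP.2.1]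
    _ = ∑ b, ∑ i, ∑ v, P i σ v b := by rw [sum_congr rfl fun i _ => sum_comm, sum_comm]
    _ = ∑ b, #(D b) * ∑ v, P i₀ σ v b := sum_congr rfl fun b _ => hcol b
    _ ≤ ∑ b, (G.indepNum : ℝ) * ∑ v, P i₀ σ v b := by
      gcongr with b
      · exact sum_nonneg fun v _ => hP.1 _ _ _ _
      · exact_mod_cast hD b
    _ = G.indepNum := by rw [← mul_sum, sum_comm, hP.2.1, mul_one]
  exact_mod_cast this

end UpperBound

/-- let `C` be a minimum-cardinality family of cliques covering the edges of
`G` together with the singletons of the isolated vertices (so `|C| = θ'_e(G)`), and let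
`ℓ ≥ θ'_e(G)`.  Then the maximum `m` for which there is an (ℓ+1)-partite non-signaling
distribution `P(v, î₁, …, î_ℓ | i, c₁, …, c_ℓ)` which is perfectly correct (it vanishes
whenever `v ∈ c_k` for all `k` but `î_{k'} ≠ i` for some `k'`) equals `α(G)`. -/
theorem ns_compound_eq_indepNum {V : Type} [Fintype V] [DecidableEq V]
    (G : SimpleGraph V) (C : Finset (Finset V)) (ℓ : ℕ)
    (hclique : ∀ c ∈ C, G.IsClique (c : Set V))
    (hcover : ∀ u v, G.Adj u v → ∃ c ∈ C, u ∈ c ∧ v ∈ c)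
    (hiso : ∀ v : V, (∀ u, ¬ G.Adj v u) → {v} ∈ C)
    (hcard : C.card = thetaPrime G)
    (hℓ : thetaPrime G ≤ ℓ) :
    sSup {m | ∃ P : Fin m → (Fin ℓ → {c // c ∈ C}) → V → (Fin ℓ → Fin m) → ℝ,
        IsNSCompound P ∧
        ∀ i c v b, (∀ k : Fin ℓ, v ∈ (c k).val) → (∃ k', b k' ≠ i) → P i c v b = 0}
      = indepNum G := by
  change sSup (zeroErrorSizes C ℓ) = _
  have hmem := exists_mem_mem_of_cover hcover hiso
  obtain ⟨s, hs⟩ := G.exists_isNIndepSet_indepNum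
  rw [indepNum_eq_indepNum]
  rcases isEmpty_or_nonempty (Fin ℓ → {c // c ∈ C}) with hinputs | hinputs
  · -- `C = ∅ < ℓ`: every `m` is attainable and `sSup` of the unbounded set `ℕ` is `0`.
    have : IsEmpty V := ⟨fun v => by
      obtain ⟨c, hc, -⟩ := hmem v v (.inl rfl)
      exact hinputs.false fun _ => ⟨c, hc⟩⟩
    rw [zeroErrorSizes_eq_univ, Set.Infinite.Nat.sSup_eq_zero Set.infinite_univ, ← hs.card_eq,
      s.eq_empty_of_isEmpty, card_empty]
  · obtain ⟨σ, hσ⟩ := Function.exists_surjective_iff.mpr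
      ⟨hinputs, Function.Embedding.nonempty_of_card_le (by simpa [hcard] using hℓ)⟩
    have hσmem (u v : V) (huv : u = v ∨ G.Adj u v) : ∃ k, u ∈ (σ k).val ∧ v ∈ (σ k).val := by
      obtain ⟨c, hc, hu, hv⟩ := hmem u v huv
      obtain ⟨k, hk⟩ := hσ ⟨c, hc⟩
      exact ⟨k, hk ▸ hu, hk ▸ hv⟩
    refine IsGreatest.csSup_eq ⟨?_, fun m hm => le_indepNum_of_mem_zeroErrorSizes hσmem hm⟩
    rw [← hs.card_eq]
    exact card_mem_zeroErrorSizes_of_isIndepSet hclique hs.isIndepSet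

end ZeroError
end
end

section
/- Let A, B, X, Y be finite nonempty sets and let ℓ ≥ |Y|. If P(a, b | x, y) (a ∈ A, b ∈ B, x ∈ X, y ∈ Y) is a bipartite non-signaling conditional probability distribution that is ℓ-shareable with respect to Bob, then P admits a local hidden variable model: there exist a finite set Λ, a probability distribution Q on Λ, and conditional probability distributions A(a | x, λ) and B(b | y, λ) such that P(a, b | x, y) = Σ_{λ ∈ Λ} Q(λ) A(a | x, λ) B(b | y, λ) for all a, b, x, y. -/
open scoped BigOperators

noncomputable section

namespace NonSignaling

variable {A B X Y : Type*}

/-- `P(a, b | x, y)` is a conditional probability distribution. -/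
def IsCondDistrib [Fintype A] [Fintype B] (P : X → Y → A → B → ℝ) : Prop :=
  (∀ x y a b, 0 ≤ P x y a b) ∧ ∀ x y, ∑ a : A, ∑ b : B, P x y a b = 1

/-- A bipartite conditional distribution is non-signaling: each party's output marginal
does not depend on the other party's input. -/
def IsNS2 [Fintype A] [Fintype B] (P : X → Y → A → B → ℝ) : Prop :=
  (∀ x y y' a, ∑ b : B, P x y a b = ∑ b : B, P x y' a b) ∧
  (∀ x x' y b, ∑ a : A, P x y a b = ∑ a : A, P x' y a b)

/-- The marginal of the outputs of the selected parties of an (ℓ+1)-partite distribution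
`Q(a, b₁, …, b_ℓ | x, y₁, …, y_ℓ)`: Alice is selected iff `sA = true`, and the Bobs in `S`
are selected; we sum over all outputs agreeing with `a₀` (resp. `b₀`) on selected parties. -/
def nsMarg {ℓ : ℕ} [Fintype A] [Fintype B] [DecidableEq A] [DecidableEq B]
    (Q : X → (Fin ℓ → Y) → A → (Fin ℓ → B) → ℝ)
    (x : X) (y : Fin ℓ → Y) (sA : Bool) (S : Finset (Fin ℓ))
    (a₀ : A) (b₀ : Fin ℓ → B) : ℝ :=
  ∑ a : A, ∑ b : Fin ℓ → B,
    if (sA = true → a = a₀) ∧ ∀ k ∈ S, b k = b₀ k then Q x y a b else 0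

/-- `Q` is an (ℓ+1)-partite non-signaling conditional probability distribution (one Alice
and ℓ Bobs): nonnegative, normalized, and for every subset of the parties the marginal
distribution of their outputs depends only on the corresponding inputs. -/
def IsNSMulti {ℓ : ℕ} [Fintype A] [Fintype B] [DecidableEq A] [DecidableEq B]
    (Q : X → (Fin ℓ → Y) → A → (Fin ℓ → B) → ℝ) : Prop :=
  (∀ x y a b, 0 ≤ Q x y a b) ∧
  (∀ x y, (∑ a : A, ∑ b : Fin ℓ → B, Q x y a b) = 1) ∧
  ∀ (sA : Bool) (S : Finset (Fin ℓ)) (x x' : X) (y y' : Fin ℓ → Y),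
    (sA = true → x = x') → (∀ k ∈ S, y k = y' k) →
    ∀ a₀ b₀, nsMarg Q x y sA S a₀ b₀ = nsMarg Q x' y' sA S a₀ b₀

/-- `P` is ℓ-shareable with respect to Bob: there is an (ℓ+1)-partite non-signaling
distribution `Q`, symmetric under permutations of the Bobs, whose marginal on Alice and
any single Bob is `P`. -/
def ShareableBob {ℓ : ℕ} [Fintype A] [Fintype B] [DecidableEq A] [DecidableEq B]
    (P : X → Y → A → B → ℝ) : Prop :=
  ∃ Q : X → (Fin ℓ → Y) → A → (Fin ℓ → B) → ℝ, IsNSMulti Q ∧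
    (∀ (π : Equiv.Perm (Fin ℓ)) (x : X) (y : Fin ℓ → Y) (a : A) (b : Fin ℓ → B),
      Q x (y ∘ π) a (b ∘ π) = Q x y a b) ∧
    (∀ (k : Fin ℓ) (x : X) (y : Fin ℓ → Y) (a : A) (b₁ : B),
      (∑ b : Fin ℓ → B, if b k = b₁ then Q x y a b else 0) = P x (y k) a b₁)

def HasLocalHiddenVariableModel (Λ : Type*) [Fintype Λ] [Fintype A] [Fintype B]
    (P : X → Y → A → B → ℝ) : Prop :=
  ∃ (q : Λ → ℝ) (QA : X → Λ → A → ℝ) (QB : Y → Λ → B → ℝ),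
    (∀ l, 0 ≤ q l) ∧ (∑ l, q l = 1) ∧
    (∀ x l, (∀ a, 0 ≤ QA x l a) ∧ ∑ a, QA x l a = 1) ∧
    (∀ y l, (∀ b, 0 ≤ QB y l b) ∧ ∑ b, QB y l b = 1) ∧
    ∀ a b x y, P x y a b = ∑ l, q l * QA x l a * QB y l b

theorem HasLocalHiddenVariableModel.of_equiv {Λ Λ' : Type*} [Fintype Λ] [Fintype Λ']
    [Fintype A] [Fintype B] {P : X → Y → A → B → ℝ} (e : Λ ≃ Λ')
    (h : HasLocalHiddenVariableModel Λ P) : HasLocalHiddenVariableModel Λ' P := by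
  obtain ⟨q, QA, QB, hq0, hq1, hQA, hQB, hP⟩ := h
  refine ⟨q ∘ e.symm, fun x => QA x ∘ e.symm, fun y => QB y ∘ e.symm,
    fun l => hq0 _, ?_, fun x l => hQA x _, fun y l => hQB y _, fun a b x y => ?_⟩
  · rwa [Function.comp_def, e.symm.sum_comp q]
  · rw [hP, ← e.symm.sum_comp]
    rfl

theorem exists_condDistrib_mul_eq {Λ : Type*} [Fintype A] [Nonempty A]
    (R : X → Λ → A → ℝ) (q : Λ → ℝ) (hR : ∀ x l a, 0 ≤ R x l a)
    (hRq : ∀ x l, ∑ a, R x l a = q l) :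
    ∃ QA : X → Λ → A → ℝ, (∀ x l, (∀ a, 0 ≤ QA x l a) ∧ ∑ a, QA x l a = 1) ∧
      ∀ x l a, R x l a = q l * QA x l a := by
  classical
  -- off the support of `q` any distribution will do
  refine ⟨fun x l a => if q l = 0 then (Fintype.card A : ℝ)⁻¹ else R x l a / q l,
    fun x l => ?_, fun x l a => ?_⟩ <;> dsimp only
  · have hq : 0 ≤ q l := hRq x l ▸ Finset.sum_nonneg fun a _ => hR x l a
    split_ifs with h0
    · refine ⟨fun a => by positivity, ?_⟩
      simp [Finset.card_univ]
    · exact ⟨fun a => div_nonneg (hR x l a) hq, by rw [← Finset.sum_div, hRq, div_self h0]⟩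
  · split_ifs with h0
    · rw [h0, zero_mul]
      exact (Finset.sum_eq_zero_iff_of_nonneg fun a _ => hR x l a).mp (hRq x l ▸ h0) a
        (Finset.mem_univ a)
    · rw [mul_div_cancel₀ _ h0]

section Sharing

variable {ℓ : ℕ} [Fintype A] [Fintype B] [DecidableEq A] [DecidableEq B]
  {Q : X → (Fin ℓ → Y) → A → (Fin ℓ → B) → ℝ}

theorem nsMarg_false_univ (x : X) (y : Fin ℓ → Y) (a₀ : A) (b₀ : Fin ℓ → B) :
    nsMarg Q x y false Finset.univ a₀ b₀ = ∑ a, Q x y a b₀ := by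
  refine Finset.sum_congr rfl fun a _ => ?_
  rw [Finset.sum_eq_single_of_mem b₀ (Finset.mem_univ _)]
  · simp
  · intro b _ hb
    rw [if_neg]
    rintro ⟨-, h⟩
    exact hb (funext fun k => h k (Finset.mem_univ k))

theorem IsNSMulti.sum_alice_eq [Nonempty A] (hQ : IsNSMulti Q) (x x' : X) (y : Fin ℓ → Y)
    (b : Fin ℓ → B) : ∑ a, Q x y a b = ∑ a, Q x' y a b := by
  rw [← nsMarg_false_univ x y (Classical.arbitrary A),
    ← nsMarg_false_univ x' y (Classical.arbitrary A)]
  exact hQ.2.2 false Finset.univ x x' y y (by simp) (fun _ _ => rfl) _ _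

/-- Since there are at least `|Y|` Bobs, one fixed choice of inputs gives every `y` to some
Bob; the joint outputs of all Bobs then serve as the hidden variable, Bob's response being
the output of the Bob who received `y`. -/
theorem ShareableBob.hasLocalHiddenVariableModel [Fintype Y] [Nonempty A] [Nonempty X]
    [Nonempty Y] {P : X → Y → A → B → ℝ} (hℓ : Fintype.card Y ≤ ℓ)
    (hSh : ShareableBob (ℓ := ℓ) P) :
    HasLocalHiddenVariableModel (Fin ℓ → B) P := by
  obtain ⟨Q, hQ, -, hmarg⟩ := hSh
  obtain ⟨ι⟩ : Nonempty (Y ↪ Fin ℓ) :=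
    Function.Embedding.nonempty_of_card_le (by simpa using hℓ)
  set y₀ : Fin ℓ → Y := Function.invFun ι
  have hy₀ : ∀ y, y₀ (ι y) = y := Function.leftInverse_invFun ι.injective
  set q : (Fin ℓ → B) → ℝ := fun f => ∑ a, Q (Classical.arbitrary X) y₀ a f
  obtain ⟨QA, hQA, hQq⟩ := exists_condDistrib_mul_eq (fun x f a => Q x y₀ a f) q
    (fun x f a => hQ.1 x y₀ a f) (fun x f => hQ.sum_alice_eq x _ y₀ f)
  refine ⟨q, QA, fun y f b => if f (ι y) = b then 1 else 0,
    fun f => Finset.sum_nonneg fun a _ => hQ.1 _ _ a f, ?_, hQA,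
    fun y f => ⟨fun b => by positivity, by simp⟩, fun a b x y => ?_⟩
  · rw [Finset.sum_comm]
    exact hQ.2.1 _ y₀
  · have hP := hmarg (ι y) x y₀ a b
    rw [hy₀] at hP
    rw [← hP]
    simp only [hQq x, mul_ite, mul_one, mul_zero]

end Sharing

theorem shareable_implies_local_hidden_variable_general
    {A B X Y : Type} [Fintype A] [Fintype B] [Fintype Y]
    [DecidableEq A] [DecidableEq B]
    [Nonempty A] [Nonempty X] [Nonempty Y]
    (ℓ : ℕ) (hℓ : Fintype.card Y ≤ ℓ)
    (P : X → Y → A → B → ℝ)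
    (hSh : ShareableBob (ℓ := ℓ) P) :
    ∃ (n : ℕ) (q : Fin n → ℝ) (QA : X → Fin n → A → ℝ) (QB : Y → Fin n → B → ℝ),
      (∀ l, 0 ≤ q l) ∧ (∑ l, q l = 1) ∧
      (∀ x l, (∀ a, 0 ≤ QA x l a) ∧ ∑ a, QA x l a = 1) ∧
      (∀ y l, (∀ b, 0 ≤ QB y l b) ∧ ∑ b, QB y l b = 1) ∧
      ∀ a b x y, P x y a b = ∑ l, q l * QA x l a * QB y l b :=
  ⟨_, (hSh.hasLocalHiddenVariableModel hℓ).of_equiv (Fintype.equivFin _)⟩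

/-- if `ℓ ≥ |Y|` and the bipartite non-signaling distribution `P(a,b|x,y)`
is ℓ-shareable with respect to Bob, then `P` admits a local hidden variable model. -/
theorem shareable_implies_local_hidden_variable
    {A B X Y : Type} [Fintype A] [Fintype B] [Fintype X] [Fintype Y]
    [DecidableEq A] [DecidableEq B]
    [Nonempty A] [Nonempty B] [Nonempty X] [Nonempty Y]
    (ℓ : ℕ) (hℓ : Fintype.card Y ≤ ℓ)
    (P : X → Y → A → B → ℝ) (hP : IsCondDistrib P) (hNS : IsNS2 P)
    (hSh : ShareableBob (ℓ := ℓ) P) :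
    ∃ (n : ℕ) (q : Fin n → ℝ) (QA : X → Fin n → A → ℝ) (QB : Y → Fin n → B → ℝ),
      (∀ l, 0 ≤ q l) ∧ (∑ l, q l = 1) ∧
      (∀ x l, (∀ a, 0 ≤ QA x l a) ∧ ∑ a, QA x l a = 1) ∧
      (∀ y l, (∀ b, 0 ≤ QB y l b) ∧ ∑ b, QB y l b = 1) ∧
      ∀ a b x y, P x y a b = ∑ l, q l * QA x l a * QB y l b :=
  shareable_implies_local_hidden_variable_general ℓ hℓ P hSh

end NonSignaling
end
end

section
/- For every finite simple graph G with at least one vertex and every t ≥ 1, the entanglement-assisted independence number of the Cartesian product of G with the complete graph K_t satisfies α*(G □ K_t) ≤ |V(G)|. -/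
/-!
Summing the operators of a strategy for `G □ K_t` over the `K_t` coordinate gives positive
semidefinite `τ_i^u = ∑_r ρ_i^{(u,r)}` with `∑_u τ_i^u = ρ`; since the vertices `(u, r)`, `r ∈ [t]`,
form a clique, `τ_i^u τ_j^u = 0` for `i ≠ j`. All ranges of the `τ_i^u` lie in the range of `ρ`,
for each `i` they span it, and for each `u` they are mutually orthogonal. Counting dimensions,
`m · rank ρ ≤ ∑_{i,u} rank τ_i^u ≤ |V| · rank ρ`, and `rank ρ > 0` because `Tr ρ = 1`.
-/

open scoped BigOperators ComplexOrder
open Matrix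

noncomputable section

open Module

namespace Submodule

theorem finrank_finsetSup_le_sum {ι K V : Type*} [DivisionRing K] [AddCommGroup V] [Module K V]
    [FiniteDimensional K V] (s : Finset ι) (p : ι → Submodule K V) :
    finrank K ↥(s.sup p) ≤ ∑ i ∈ s, finrank K (p i) := by
  induction s using Finset.cons_induction with
  | empty => simp
  | cons a s ha ih =>
    rw [Finset.sup_cons, Finset.sum_cons]
    exact (finrank_add_le_finrank_add_finrank _ _).trans (Nat.add_le_add_left ih _)

variable {𝕜 E : Type*} [RCLike 𝕜] [NormedAddCommGroup E] [InnerProductSpace 𝕜 E]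
  [FiniteDimensional 𝕜 E]

theorem finrank_finsetSup_eq_sum_of_isOrtho {ι : Type*} (s : Finset ι) (p : ι → Submodule 𝕜 E)
    (hp : (s : Set ι).Pairwise fun i j => p i ⟂ p j) :
    finrank 𝕜 ↥(s.sup p) = ∑ i ∈ s, finrank 𝕜 (p i) := by
  induction s using Finset.cons_induction with
  | empty => simp
  | cons a s ha ih =>
    rw [Finset.coe_cons, Set.pairwise_insert] at hp
    have hortho : s.sup p ⟂ p a :=
      Finset.sup_le fun j hj => (hp.2 j hj fun h => ha (h ▸ hj)).2
    rw [Finset.sup_cons, Finset.sum_cons, ← ih hp.1, ← finrank_sup_add_finrank_inf_eq,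
      hortho.symm.disjoint.eq_bot, finrank_bot, add_zero]

theorem card_le_card_of_isOrtho_of_le_iSup {ι κ : Type*} [Fintype ι] [Fintype κ]
    {R : Submodule 𝕜 E} (hR : R ≠ ⊥) (W : ι → κ → Submodule 𝕜 E) (hle : ∀ i k, W i k ≤ R)
    (hcover : ∀ i, R ≤ ⨆ k, W i k) (hortho : ∀ k, Pairwise fun i j => W i k ⟂ W j k) :
    Fintype.card ι ≤ Fintype.card κ := by
  have hrow (i : ι) : finrank 𝕜 R ≤ ∑ k, finrank 𝕜 (W i k) :=
    calc finrank 𝕜 R ≤ finrank 𝕜 ↥(Finset.univ.sup (W i)) := by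
          rw [Finset.sup_univ_eq_iSup]; exact finrank_mono (hcover i)
      _ ≤ ∑ k, finrank 𝕜 (W i k) := finrank_finsetSup_le_sum _ _
  have hcol (k : κ) : ∑ i, finrank 𝕜 (W i k) ≤ finrank 𝕜 R := by
    rw [← finrank_finsetSup_eq_sum_of_isOrtho _ _ ((hortho k).set_pairwise _)]
    exact finrank_mono (Finset.sup_le fun i _ => hle i k)
  refine Nat.le_of_mul_le_mul_right ?_ (Nat.pos_of_ne_zero (mt finrank_eq_zero.mp hR))
  calc Fintype.card ι * finrank 𝕜 R = ∑ _i : ι, finrank 𝕜 R := by simp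
    _ ≤ ∑ i, ∑ k, finrank 𝕜 (W i k) := Finset.sum_le_sum fun i _ => hrow i
    _ = ∑ k, ∑ i, finrank 𝕜 (W i k) := Finset.sum_comm
    _ ≤ ∑ _k : κ, finrank 𝕜 R := Finset.sum_le_sum fun k _ => hcol k
    _ = Fintype.card κ * finrank 𝕜 R := by simp

end Submodule

namespace LinearMap

variable {𝕜 E : Type*} [RCLike 𝕜] [NormedAddCommGroup E] [InnerProductSpace 𝕜 E]
  {S T : E →ₗ[𝕜] E}

theorem IsSymmetric.range_le_range_of_ker_le_ker [FiniteDimensional 𝕜 E] (hS : S.IsSymmetric)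
    (hT : T.IsSymmetric) (h : ker S ≤ ker T) : range T ≤ range S := by
  rw [← (range T).orthogonal_orthogonal, ← (range S).orthogonal_orthogonal, hT.orthogonal_range,
    hS.orthogonal_range]
  exact Submodule.orthogonal_le h

theorem IsSymmetric.isOrtho_range_of_comp_eq_zero (hT : T.IsSymmetric) (h : T ∘ₗ S = 0) :
    range T ⟂ range S := by
  rw [Submodule.isOrtho_iff_inner_eq]
  rintro _ ⟨x, rfl⟩ _ ⟨y, rfl⟩
  rw [hT, ← comp_apply, h, zero_apply, inner_zero_right]

end LinearMap

namespace Matrix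

variable {𝕜 n ι : Type*} [RCLike 𝕜] [Fintype n]

theorem PosSemidef.mulVec_eq_zero_of_sum_mulVec_eq_zero {s : Finset ι} {A : ι → Matrix n n 𝕜}
    (hA : ∀ i ∈ s, (A i).PosSemidef) {i : ι} (hi : i ∈ s) {x : n → 𝕜}
    (hx : (∑ j ∈ s, A j) *ᵥ x = 0) : A i *ᵥ x = 0 := by
  rw [← (hA i hi).dotProduct_mulVec_zero_iff]
  have hsum : ∑ j ∈ s, star x ⬝ᵥ (A j *ᵥ x) = 0 := by
    rw [← dotProduct_sum, ← sum_mulVec, hx, dotProduct_zero]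
  exact (Finset.sum_eq_zero_iff_of_nonneg fun j hj => (hA j hj).dotProduct_mulVec_nonneg x).mp
    hsum i hi

theorem PosSemidef.range_toEuclideanLin_le_sum [DecidableEq n] {s : Finset ι}
    {A : ι → Matrix n n 𝕜} (hA : ∀ i ∈ s, (A i).PosSemidef) {i : ι} (hi : i ∈ s) :
    LinearMap.range (toEuclideanLin (A i)) ≤ LinearMap.range (toEuclideanLin (∑ j ∈ s, A j)) := by
  refine LinearMap.IsSymmetric.range_le_range_of_ker_le_ker ?_ ?_ fun x hx => ?_
  · exact isSymmetric_toEuclideanLin_iff.mpr (posSemidef_sum s hA).isHermitian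
  · exact isSymmetric_toEuclideanLin_iff.mpr (hA i hi).isHermitian
  · simp only [LinearMap.mem_ker, toLpLin_apply, WithLp.toLp_eq_zero] at hx ⊢
    exact PosSemidef.mulVec_eq_zero_of_sum_mulVec_eq_zero hA hi hx

theorem card_le_card_of_sum_eq_of_mul_eq_zero [DecidableEq n] {κ : Type*} [Fintype ι]
    [Fintype κ] {ρ : Matrix n n 𝕜} (hρ : ρ ≠ 0) {τ : ι → κ → Matrix n n 𝕜}
    (hτ : ∀ i k, (τ i k).PosSemidef) (hsum : ∀ i, ∑ k, τ i k = ρ)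
    (hmul : ∀ k i j, i ≠ j → τ i k * τ j k = 0) :
    Fintype.card ι ≤ Fintype.card κ := by
  refine Submodule.card_le_card_of_isOrtho_of_le_iSup (R := LinearMap.range (toEuclideanLin ρ))
    ?_ (fun i k => LinearMap.range (toEuclideanLin (τ i k))) ?_ ?_ ?_
  · rwa [Ne, LinearMap.range_eq_bot, LinearEquiv.map_eq_zero_iff]
  · intro i k
    rw [← hsum i]
    exact PosSemidef.range_toEuclideanLin_le_sum (fun k _ => hτ i k) (Finset.mem_univ k)
  · rintro i _ ⟨x, rfl⟩
    rw [← hsum i, map_sum, LinearMap.sum_apply]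
    exact Submodule.sum_mem _ fun k _ => Submodule.mem_iSup_of_mem k ⟨x, rfl⟩
  · intro k i j hij
    refine LinearMap.IsSymmetric.isOrtho_range_of_comp_eq_zero
      (isSymmetric_toEuclideanLin_iff.mpr (hτ i k).isHermitian) ?_
    rw [← toLpLin_mul_same, hmul k i j hij, map_zero]

end Matrix

namespace ZeroError

theorem eq_or_cartProdK_adj_of_fst_eq {V : Type*} (G : SimpleGraph V) {t : ℕ} {x y : V × Fin t}
    (h : x.1 = y.1) : x = y ∨ (cartProdK G t).Adj x y := by
  by_cases h2 : x.2 = y.2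
  · exact Or.inl (Prod.ext h h2)
  · exact Or.inr (Or.inr ⟨h, h2⟩)

theorem qIndep_cartProdK_le_general {V : Type} [Fintype V] (G : SimpleGraph V)
    (t : ℕ) :
    qIndepNum (cartProdK G t) ≤ Fintype.card V := by
  refine csSup_le' ?_
  rintro m ⟨d, ρ, σ, -, hρ, hσ, hsum, horth⟩
  let τ : Fin m → V → Matrix (Fin d) (Fin d) ℂ := fun i u => ∑ r, σ i (u, r)
  have hτ (i : Fin m) (u : V) : (τ i u).PosSemidef := posSemidef_sum _ fun r _ => hσ i (u, r)
  have hτsum (i : Fin m) : ∑ u, τ i u = ρ := by rw [← hsum i, Fintype.sum_prod_type]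
  have hτmul (u : V) (i j : Fin m) (hij : i ≠ j) : τ i u * τ j u = 0 := by
    simp only [τ, Finset.sum_mul_sum]
    exact Finset.sum_eq_zero fun r _ => Finset.sum_eq_zero fun s _ =>
      horth i j _ _ hij (eq_or_cartProdK_adj_of_fst_eq G rfl)
  have hρ0 : ρ ≠ 0 := by rintro rfl; simp at hρ
  simpa only [Fintype.card_fin] using card_le_card_of_sum_eq_of_mul_eq_zero hρ0 hτ hτsum hτmul

/-- `α*(G □ K_t) ≤ |V(G)|` for every finite simple graph `G` with at least
one vertex and every `t ≥ 1`. -/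
theorem qIndep_cartProdK_le {V : Type} [Fintype V] [Nonempty V] (G : SimpleGraph V)
    (t : ℕ) (ht : 1 ≤ t) :
    qIndepNum (cartProdK G t) ≤ Fintype.card V :=
  qIndep_cartProdK_le_general G t

end ZeroError
end
end

section
/- Let G be a finite simple graph such that χ*(G) · α*(G) < |V(G)|, and set t = χ*(G). Then the entanglement-assisted independence number of the disjoint union of t copies of G satisfies α*(G^{+t}) > t · α*(G). -/
open scoped BigOperators ComplexOrder
open Matrix

noncomputable section

namespace ZeroError

variable {V W : Type*}

/-!
A quantum colouring of `G` with `t = χ*(G)` colours yields `|V|` perfectly distinguishable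
messages for `G^{+t}`: message `v` is sent as the vertex `v` in every copy, copy `k` carrying the
colour-`k` part of the colouring at `v`. Hence `α*(G^{+t}) ≥ |V| > t · α*(G)`.

Since `sSup` of an unbounded set of naturals is `0`, this needs `α*(H) ≤ |V(H)|`. For a
strategy `(ρ, σ)` put `Pᵤ = ∑ᵢ σᵢᵘ`; the `σᵢᵘ` are mutually orthogonal and lie below `ρ`, so
`Tr (Pᵤ ρ) ≤ Tr (ρ²)`, and summing over `u` gives `m · Tr (ρ²) ≤ |V(H)| · Tr (ρ²)`.
-/

section TraceInequalities

open scoped MatrixOrder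

variable {𝕜 n : Type*} [RCLike 𝕜] [Fintype n]

theorem _root_.Matrix.PosSemidef.trace_mul_nonneg_s16 {A B : Matrix n n 𝕜} (hA : A.PosSemidef)
    (hB : B.PosSemidef) : 0 ≤ (A * B).trace := by
  classical
  obtain ⟨C, rfl⟩ := CStarAlgebra.nonneg_iff_eq_star_mul_self.mp hA.nonneg
  rw [star_eq_conjTranspose, Matrix.mul_assoc, trace_mul_comm]
  exact (hB.mul_mul_conjTranspose_same C).trace_nonneg.trans_eq (by rw [Matrix.mul_assoc])

theorem _root_.Matrix.IsHermitian.trace_mul_self_nonneg {A : Matrix n n 𝕜} (hA : A.IsHermitian) :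
    0 ≤ (A * A).trace := by
  simpa only [hA.eq] using (posSemidef_conjTranspose_mul_self A).trace_nonneg

theorem _root_.Matrix.IsHermitian.trace_mul_self_pos {A : Matrix n n 𝕜} (hA : A.IsHermitian)
    (hA0 : A ≠ 0) : 0 < (A * A).trace := by
  refine hA.trace_mul_self_nonneg.lt_of_ne' ?_
  simpa only [hA.eq] using trace_conjTranspose_mul_self_eq_zero_iff.not.mpr hA0

/-- Expand `0 ≤ Tr ((P - ρ)²)` for `P = ∑ τᵢ`, where orthogonality gives
`Tr (P²) = ∑ Tr (τᵢ²) ≤ Tr (P ρ)`. -/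
theorem trace_sum_mul_le_trace_mul_self {ι : Type*} [Fintype ι] {ρ : Matrix n n 𝕜}
    {τ : ι → Matrix n n 𝕜} (hρ : ρ.IsHermitian) (hτ : ∀ i, (τ i).PosSemidef)
    (hτρ : ∀ i, (ρ - τ i).PosSemidef) (horth : Pairwise fun i j => τ i * τ j = 0) :
    ((∑ i, τ i) * ρ).trace ≤ (ρ * ρ).trace := by
  classical
  set P := ∑ i, τ i
  have hP : P.IsHermitian := (posSemidef_sum _ fun i _ => hτ i).isHermitian
  have hPP : (P * P).trace ≤ (P * ρ).trace := by
    have hsq : P * P = ∑ i, τ i * τ i := by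
      simp only [P, Finset.sum_mul, Finset.mul_sum]
      refine Finset.sum_congr rfl fun i _ => ?_
      exact Finset.sum_eq_single i (fun j _ hji => horth hji) (by simp)
    rw [hsq, Finset.sum_mul, trace_sum, trace_sum]
    refine Finset.sum_le_sum fun i _ => sub_nonneg.mp ?_
    simpa only [Matrix.mul_sub, trace_sub] using (hτ i).trace_mul_nonneg_s16 (hτρ i)
  have hsq := (hP.sub hρ).trace_mul_self_nonneg
  rw [Matrix.sub_mul, Matrix.mul_sub, Matrix.mul_sub, trace_sub, trace_sub, trace_sub,
    trace_mul_comm ρ P] at hsq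
  linear_combination hsq + hPP

theorem card_le_card_of_orthogonal_decompositions {ι : Type*} [Fintype ι] [Fintype W]
    {ρ : Matrix n n 𝕜} {σ : ι → W → Matrix n n 𝕜} (hρ : ρ.IsHermitian) (hρ0 : ρ ≠ 0)
    (hσ : ∀ i u, (σ i u).PosSemidef) (hsum : ∀ i, ∑ u, σ i u = ρ)
    (horth : ∀ i j u, i ≠ j → σ i u * σ j u = 0) :
    Fintype.card ι ≤ Fintype.card W := by
  classical
  have hσρ : ∀ i u, (ρ - σ i u).PosSemidef := fun i u => by
    rw [← hsum i, ← Finset.sum_erase_add _ _ (Finset.mem_univ u), add_sub_cancel_right]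
    exact posSemidef_sum _ fun v _ => hσ i v
  have hvertex : ∀ u, ((∑ i, σ i u) * ρ).trace ≤ (ρ * ρ).trace := fun u =>
    trace_sum_mul_le_trace_mul_self hρ (hσ · u) (hσρ · u) fun i j hij => horth i j u hij
  have htotal : ∑ u, ((∑ i, σ i u) * ρ).trace = Fintype.card ι • (ρ * ρ).trace := by
    simp only [Finset.sum_mul, trace_sum]
    rw [Finset.sum_comm]
    simp only [← trace_sum, ← Finset.sum_mul, hsum, Finset.sum_const, Finset.card_univ,
      smul_mul_assoc, trace_smul]
  by_contra! hlt
  have := Finset.sum_le_sum fun u (_ : u ∈ Finset.univ) => hvertex u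
  rw [htotal, Finset.sum_const, Finset.card_univ] at this
  exact (nsmul_lt_nsmul_left (hρ.trace_mul_self_pos hρ0) hlt).not_ge this

end TraceInequalities

def IsQIndepWitness [Fintype V] (G : SimpleGraph V) {m d : ℕ} (ρ : Matrix (Fin d) (Fin d) ℂ)
    (σ : Fin m → V → Matrix (Fin d) (Fin d) ℂ) : Prop :=
  ρ.PosSemidef ∧ ρ.trace = 1 ∧ (∀ i u, (σ i u).PosSemidef) ∧ (∀ i, ∑ u, σ i u = ρ) ∧
    ∀ i j u v, i ≠ j → (u = v ∨ G.Adj u v) → σ i u * σ j v = 0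

def IsQColoring [Fintype V] (G : SimpleGraph V) {m d : ℕ} (ρ : Matrix (Fin d) (Fin d) ℂ)
    (σ : V → Fin m → Matrix (Fin d) (Fin d) ℂ) : Prop :=
  ρ.PosSemidef ∧ ρ.trace = 1 ∧ (∀ x i, (σ x i).PosSemidef) ∧ (∀ x, ∑ i, σ x i = ρ) ∧
    ∀ x y i, G.Adj x y → σ x i * σ y i = 0

section Witnesses

variable [Fintype V] {G : SimpleGraph V}

theorem IsQIndepWitness.le_card {m d : ℕ} {ρ : Matrix (Fin d) (Fin d) ℂ}
    {σ : Fin m → V → Matrix (Fin d) (Fin d) ℂ} (hw : IsQIndepWitness G ρ σ) :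
    m ≤ Fintype.card V := by
  obtain ⟨hρ, htr, hσ, hsum, horth⟩ := hw
  have hρ0 : ρ ≠ 0 := by rintro rfl; simp at htr
  simpa using card_le_card_of_orthogonal_decompositions hρ.isHermitian hρ0 hσ hsum
    fun i j u hij => horth i j u u hij (.inl rfl)

theorem IsQIndepWitness.le_qIndepNum {m d : ℕ} {ρ : Matrix (Fin d) (Fin d) ℂ}
    {σ : Fin m → V → Matrix (Fin d) (Fin d) ℂ} (hw : IsQIndepWitness G ρ σ) :
    m ≤ qIndepNum G :=
  le_csSup ⟨Fintype.card V, fun _ ⟨_, _, _, hw'⟩ => IsQIndepWitness.le_card hw'⟩ ⟨d, ρ, σ, hw⟩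

theorem exists_isQColoring_of_coloring {m : ℕ} (c : V → Fin m)
    (hc : ∀ u v, G.Adj u v → c u ≠ c v) :
    ∃ (d : ℕ) (ρ : Matrix (Fin d) (Fin d) ℂ) (σ : V → Fin m → Matrix (Fin d) (Fin d) ℂ),
      IsQColoring G ρ σ := by
  refine ⟨1, 1, fun x i => if i = c x then 1 else 0, .one, by simp, fun x i => ?_, by simp,
    fun x y i hxy => ?_⟩
  · dsimp only
    split_ifs
    exacts [.one, .zero]
  · dsimp only
    split_ifs with hx hy
    · exact absurd (hx.symm.trans hy) (hc x y hxy)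
    all_goals simp

theorem exists_isQColoring_qChromNum :
    ∃ (d : ℕ) (ρ : Matrix (Fin d) (Fin d) ℂ)
      (σ : V → Fin (qChromNum G) → Matrix (Fin d) (Fin d) ℂ), IsQColoring G ρ σ :=
  Nat.sInf_mem (s := {m | ∃ (d : ℕ) (ρ : Matrix (Fin d) (Fin d) ℂ)
      (σ : V → Fin m → Matrix (Fin d) (Fin d) ℂ), IsQColoring G ρ σ})
    ⟨_, exists_isQColoring_of_coloring (Fintype.equivFin V) fun _ _ h =>
      (Fintype.equivFin V).injective.ne (G.ne_of_adj h)⟩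

theorem IsQColoring.isQIndepWitness_copies [DecidableEq V] {m d N : ℕ}
    {ρ : Matrix (Fin d) (Fin d) ℂ} {σ : V → Fin m → Matrix (Fin d) (Fin d) ℂ}
    (hσ : IsQColoring G ρ σ) {f : Fin N → V} (hf : f.Injective) :
    IsQIndepWitness (copies G m) ρ fun i x => if x.1 = f i then σ x.1 x.2 else 0 := by
  obtain ⟨hρ, htr, hpsd, hsum, hcol⟩ := hσ
  refine ⟨hρ, htr, fun i x => ?_, fun i => ?_, ?_⟩
  · dsimp only
    split_ifs
    exacts [hpsd _ _, .zero]
  · simp [Fintype.sum_prod_type, hsum]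
  · rintro i j ⟨x, k⟩ ⟨y, l⟩ hij hxy
    dsimp only
    split_ifs with hx hy hy <;> try simp
    subst hx hy
    obtain hxy | ⟨rfl, hadj⟩ := hxy
    · exact absurd (hf (congrArg Prod.fst hxy)) hij
    · exact hcol _ _ _ hadj

theorem card_le_qIndepNum_copies_qChromNum :
    Fintype.card V ≤ qIndepNum (copies G (qChromNum G)) := by
  classical
  obtain ⟨d, ρ, σ, hσ⟩ := exists_isQColoring_qChromNum (G := G)
  exact (hσ.isQIndepWitness_copies (Fintype.equivFin V).symm.injective).le_qIndepNum

end Witnesses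

/-- if `χ*(G) · α*(G) < |V(G)|` and `t = χ*(G)`, then
`α*(G^{+t}) > t · α*(G)`. -/
theorem qIndep_disjoint_union_strict {V : Type} [Fintype V] (G : SimpleGraph V)
    (h : qChromNum G * qIndepNum G < Fintype.card V) (t : ℕ) (ht : t = qChromNum G) :
    t * qIndepNum G < qIndepNum (copies G t) := by
  subst ht
  exact h.trans_le card_le_qIndepNum_copies_qChromNum

end ZeroError
end
end
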